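/- Let A and B be groups and W ⊆ F_∞ a set of words. Every element y of the verbal product A ∗_W B has a unique writing of the form y = a·b·u with a ∈ A, b ∈ B and u ∈ [A,B]^w. Moreover, if y' = a'·b'·u' with a' ∈ A, b' ∈ B, u' ∈ [A,B]^w, then the product yy' has the form yy' = (aa')·(bb')·ũ for some ũ ∈ [A,B]^w. -/

import Mathlib

open Monoid

/-- The verbal subgroup `W(G)`: the subgroup of `G` generated by all evaluations of the
words of `W` at tuples of elements of `G`. -/
def verbalSubgroup (W : Set (FreeGroup ℕ)) (G : Type*) [Group G] : Subgroup G :=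
  Subgroup.closure {x | ∃ w ∈ W, ∃ f : ℕ → G, FreeGroup.lift f w = x}

theorem lift_comp_eval {G H : Type*} [Group G] [Group H] (φ : G →* H) (f : ℕ → G)
    (w : FreeGroup ℕ) : φ (FreeGroup.lift f w) = FreeGroup.lift (φ ∘ f) w := by
  have h : φ.comp (FreeGroup.lift f) = FreeGroup.lift (φ ∘ f) :=
    FreeGroup.ext_hom _ _ (fun a => by simp)
  exact DFunLike.congr_fun h w

theorem verbalSubgroup_map_le {G H : Type*} [Group G] [Group H] (W : Set (FreeGroup ℕ))
    (φ : G →* H) : (verbalSubgroup W G).map φ ≤ verbalSubgroup W H := by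
  rw [verbalSubgroup, MonoidHom.map_closure, Subgroup.closure_le]
  rintro x ⟨y, ⟨w, hw, f, rfl⟩, rfl⟩
  exact Subgroup.subset_closure ⟨w, hw, φ ∘ f, (lift_comp_eval φ f w).symm⟩

/-- Verbal subgroups are normal. -/
instance verbalSubgroup_normal (W : Set (FreeGroup ℕ)) (G : Type*) [Group G] :
    (verbalSubgroup W G).Normal := by
  constructor
  intro n hn g
  have h := verbalSubgroup_map_le (G := G) (H := G) W (MulAut.conj g).toMonoidHom
  have h2 : (MulAut.conj g).toMonoidHom n ∈ verbalSubgroup W G := h ⟨n, hn, rfl⟩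
  simpa using h2

open scoped commutatorElement in
/-- The subgroup `[A,B]` of the free product `A ∗ B` generated by the commutators
`[a,b] = a * b * a⁻¹ * b⁻¹` with `a ∈ A`, `b ∈ B`. -/
def commSubgroup (A B : Type*) [Group A] [Group B] : Subgroup (Coprod A B) :=
  Subgroup.closure {x | ∃ (a : A) (b : B), x = ⁅(Coprod.inl a : Coprod A B), Coprod.inr b⁆}

/-- The kernel of the verbal product: (the normal closure of) `W(A ∗ B) ∩ [A,B]`.
Since `W(A ∗ B) ∩ [A,B]` is in fact a normal subgroup of `A ∗ B`, taking the normal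
closure does not change the subgroup. -/
def verbalProductKer (W : Set (FreeGroup ℕ)) (A B : Type*) [Group A] [Group B] :
    Subgroup (Coprod A B) :=
  Subgroup.normalClosure ((verbalSubgroup W (Coprod A B) ⊓ commSubgroup A B : Subgroup _) : Set _)

instance verbalProductKer_normal (W : Set (FreeGroup ℕ)) (A B : Type*) [Group A] [Group B] :
    (verbalProductKer W A B).Normal := Subgroup.normalClosure_normal

/-- The verbal product `A ∗_W B := (A ∗ B)/(W(A ∗ B) ∩ [A,B])`. -/
abbrev VerbalProduct (W : Set (FreeGroup ℕ)) (A B : Type*) [Group A] [Group B] : Type _ :=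
  Coprod A B ⧸ verbalProductKer W A B

/-- The quotient homomorphism `q : A ∗ B → A ∗_W B`. -/
def vq (W : Set (FreeGroup ℕ)) (A B : Type*) [Group A] [Group B] :
    Coprod A B →* VerbalProduct W A B :=
  QuotientGroup.mk' (verbalProductKer W A B)

/-- The copy of `A` inside the verbal product `A ∗_W B`. -/
def vinl (W : Set (FreeGroup ℕ)) (A B : Type*) [Group A] [Group B] :
    A →* VerbalProduct W A B := (vq W A B).comp Coprod.inl

/-- The copy of `B` inside the verbal product `A ∗_W B`. -/
def vinr (W : Set (FreeGroup ℕ)) (A B : Type*) [Group A] [Group B] :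
    B →* VerbalProduct W A B := (vq W A B).comp Coprod.inr

/-- `[A,B]^w`, the image of `[A,B]` in the verbal product `A ∗_W B`. -/
def commW (W : Set (FreeGroup ℕ)) (A B : Type*) [Group A] [Group B] :
    Subgroup (VerbalProduct W A B) := (commSubgroup A B).map (vq W A B)

/-!
The projection `A ∗ B → A × B` has kernel `[A,B]`: this subgroup is normalized by `A` and
by `B`, which generate `A ∗ B`, and modulo it `A` and `B` commute. Since `[A,B]` contains
`W(A ∗ B) ∩ [A,B]`, the projection descends to `A ∗_W B → A × B`, with kernel `[A,B]^w` and
split by the inclusions of `A` and `B`. For any such split projection `p`, a writing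
`y = a·b·u` with `p u = 1` forces `(a, b) = p y` and `u = (ab)⁻¹y`; this gives existence,
uniqueness, and the product rule, as `p` is multiplicative.
-/

open scoped commutatorElement

section SplitProjection

variable {G A B : Type*} [Group G] [Group A] [Group B] {i : A →* G} {j : B →* G}
  {p : G →* A × B}

theorem mem_ker_and_eq_mul_mul_iff (hi : p.comp i = .inl A B) (hj : p.comp j = .inr A B)
    {y u : G} {a : A} {b : B} :
    (u ∈ p.ker ∧ y = i a * j b * u) ↔ (p y = (a, b) ∧ u = (i a * j b)⁻¹ * y) := by
  have hab : p (i a * j b) = (a, b) := by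
    rw [map_mul, ← p.comp_apply, ← p.comp_apply, hi, hj]
    simp
  constructor
  · rintro ⟨hu, rfl⟩
    rw [p.mem_ker] at hu
    exact ⟨by rw [map_mul, hab, hu, mul_one], by group⟩
  · rintro ⟨hy, rfl⟩
    exact ⟨by rw [p.mem_ker, map_mul, map_inv, hab, hy, inv_mul_cancel], by group⟩

variable (hi : p.comp i = .inl A B) (hj : p.comp j = .inr A B)
include hi hj

theorem exists_unique_mul_mul_mem_ker (y : G) :
    ∃ a : A, ∃ b : B, ∃ u ∈ p.ker, y = i a * j b * u ∧
      ∀ (a' : A) (b' : B), ∀ u' ∈ p.ker,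
        y = i a' * j b' * u' → a' = a ∧ b' = b ∧ u' = u := by
  obtain ⟨hu, hy⟩ := (mem_ker_and_eq_mul_mul_iff hi hj).2 ⟨rfl, rfl⟩
  refine ⟨(p y).1, (p y).2, _, hu, hy, fun a' b' u' hu' hy' => ?_⟩
  obtain ⟨hp, rfl⟩ := (mem_ker_and_eq_mul_mul_iff hi hj).1 ⟨hu', hy'⟩
  simp [hp]

theorem exists_mul_mul_mem_ker_of_mul (a a' : A) (b b' : B) {u u' : G} (hu : u ∈ p.ker)
    (hu' : u' ∈ p.ker) :
    ∃ u₂ ∈ p.ker, (i a * j b * u) * (i a' * j b' * u') = i (a * a') * j (b * b') * u₂ := by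
  have hp : p ((i a * j b * u) * (i a' * j b' * u')) = (a * a', b * b') := by
    rw [map_mul, ((mem_ker_and_eq_mul_mul_iff hi hj).1 ⟨hu, rfl⟩).1,
      ((mem_ker_and_eq_mul_mul_iff hi hj).1 ⟨hu', rfl⟩).1, Prod.mk_mul_mk]
  exact ⟨_, (mem_ker_and_eq_mul_mul_iff hi hj).2 ⟨hp, rfl⟩⟩

end SplitProjection

section CommSubgroup

variable {A B : Type*} [Group A] [Group B]

theorem commSubgroup_eq_commutator :
    commSubgroup A B =
      ⁅(Coprod.inl : A →* Coprod A B).range, (Coprod.inr : B →* Coprod A B).range⁆ := by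
  rw [commSubgroup, Subgroup.commutator_def]
  congr 1
  ext x
  constructor
  · rintro ⟨a, b, rfl⟩
    exact ⟨_, ⟨a, rfl⟩, _, ⟨b, rfl⟩, rfl⟩
  · rintro ⟨_, ⟨a, rfl⟩, _, ⟨b, rfl⟩, rfl⟩
    exact ⟨a, b, rfl⟩

instance commSubgroup_normal : (commSubgroup A B).Normal := by
  rw [← Subgroup.normalizer_eq_top_iff, eq_top_iff, ← Coprod.range_inl_sup_range_inr,
    commSubgroup_eq_commutator]
  exact sup_le (Subgroup.normalizer_commutator_ge_left _ _)
    (Subgroup.normalizer_commutator_ge_right _ _)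

theorem Monoid.Coprod.ker_toProd :
    (Coprod.toProd : Coprod A B →* A × B).ker = commSubgroup A B := by
  refine le_antisymm ?_ ?_
  · let q := QuotientGroup.mk' (commSubgroup A B)
    have hcomm : ∀ a b, Commute (q.comp Coprod.inl a) (q.comp Coprod.inr b) := fun a b => by
      rw [← commutatorElement_eq_one_iff_commute, MonoidHom.comp_apply, MonoidHom.comp_apply,
        ← map_commutatorElement]
      exact (QuotientGroup.eq_one_iff _).2 (Subgroup.subset_closure ⟨a, b, rfl⟩)
    have hq : (MonoidHom.noncommCoprod _ _ hcomm).comp Coprod.toProd = q :=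
      Coprod.hom_ext (by ext; simp) (by ext; simp)
    intro x hx
    rw [← QuotientGroup.eq_one_iff]
    change q x = 1
    rw [← hq, MonoidHom.comp_apply, hx, map_one]
  · rw [commSubgroup_eq_commutator, Subgroup.commutator_le]
    rintro _ ⟨a, rfl⟩ _ ⟨b, rfl⟩
    simp [MonoidHom.mem_ker, commutatorElement_def]

end CommSubgroup

section VerbalProduct

variable (W : Set (FreeGroup ℕ)) (A B : Type*) [Group A] [Group B]

theorem verbalProductKer_le_commSubgroup : verbalProductKer W A B ≤ commSubgroup A B :=
  Subgroup.normalClosure_le_normal (SetLike.coe_subset_coe.mpr inf_le_right)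

def VerbalProduct.toProd : VerbalProduct W A B →* A × B :=
  QuotientGroup.lift _ (Coprod.toProd : Coprod A B →* A × B)
    ((verbalProductKer_le_commSubgroup W A B).trans Coprod.ker_toProd.ge)

theorem VerbalProduct.toProd_comp_vinl : (toProd W A B).comp (vinl W A B) = .inl A B := rfl

theorem VerbalProduct.toProd_comp_vinr : (toProd W A B).comp (vinr W A B) = .inr A B := rfl

theorem VerbalProduct.ker_toProd : (toProd W A B).ker = commW W A B := by
  rw [toProd, QuotientGroup.ker_lift, Coprod.ker_toProd]
  rfl

end VerbalProduct

/-- Every element of the verbal product `A ∗_W B` has a unique writing `y = a·b·u` with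
`a ∈ A`, `b ∈ B`, `u ∈ [A,B]^w`; and products multiply as
`(abu)(a'b'u') = (aa')(bb')u₂` for some `u₂ ∈ [A,B]^w`. -/
theorem verbalProduct_unique_writing {A B : Type*} [Group A] [Group B]
    (W : Set (FreeGroup ℕ)) :
    (∀ y : VerbalProduct W A B, ∃ a : A, ∃ b : B, ∃ u ∈ commW W A B,
        y = vinl W A B a * vinr W A B b * u ∧
        ∀ (a' : A) (b' : B), ∀ u' ∈ commW W A B,
          y = vinl W A B a' * vinr W A B b' * u' → a' = a ∧ b' = b ∧ u' = u) ∧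
    (∀ (a a' : A) (b b' : B), ∀ u ∈ commW W A B, ∀ u' ∈ commW W A B,
        ∃ u₂ ∈ commW W A B,
          (vinl W A B a * vinr W A B b * u) * (vinl W A B a' * vinr W A B b' * u') =
            vinl W A B (a * a') * vinr W A B (b * b') * u₂) := by
  rw [← VerbalProduct.ker_toProd]
  have hl := VerbalProduct.toProd_comp_vinl W A B
  have hr := VerbalProduct.toProd_comp_vinr W A B
  exact ⟨exists_unique_mul_mul_mem_ker hl hr,
    fun a a' b b' _ hu _ hu' => exists_mul_mul_mem_ker_of_mul hl hr a a' b b' hu hu'⟩
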